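/- If G is an 𝒮₅-contractible loopless multigraph and G' is obtained from G by adding one new edge (between existing vertices), then G' is 𝒮₅-contractible and w(G') ≥ w(G). -/

import Mathlib

open Finset

/-- A loopless multigraph on vertex type `V`, given by a symmetric multiplicity function. -/
structure Multigraph (V : Type*) where
  mult : V → V → ℕ
  symm : ∀ u v, mult u v = mult v u
  loopless : ∀ v, mult v v = 0

namespace Multigraph

variable {V W : Type*}

/-- The underlying simple graph (adjacency = positive multiplicity). -/
def toSimpleGraph (G : Multigraph V) : SimpleGraph V where
  Adj u v := 0 < G.mult u v
  symm := by
    constructor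
    intro u v h
    rwa [G.symm v u]
  loopless := by
    constructor
    intro v h
    simp [G.loopless v] at h

/-- Connectivity of a multigraph. -/
def Connected (G : Multigraph V) : Prop := G.toSimpleGraph.Connected

/-- Number of edges `e(G)`. -/
def edgeCount (G : Multigraph V) [Fintype V] : ℕ := (∑ u, ∑ v, G.mult u v) / 2

/-- `d(X)`: the number of edges with exactly one endpoint in `X`. -/
def cut (G : Multigraph V) [Fintype V] [DecidableEq V] (X : Finset V) : ℕ :=
  ∑ u ∈ X, ∑ v ∈ Xᶜ, G.mult u v

/-- Degree of a vertex (with multiplicity). -/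
def degree (G : Multigraph V) [Fintype V] (v : V) : ℕ := ∑ u, G.mult v u

/-- Number of edges of `G` with both endpoints in `A` (edges of the induced subgraph `G[A]`). -/
def edgesWithin (G : Multigraph V) (A : Finset V) : ℕ :=
  (∑ u ∈ A, ∑ v ∈ A, G.mult u v) / 2

/-- Weight of a family of parts: `Σ d(A) − 10·t + 16`. -/
def partsWeight (G : Multigraph V) [Fintype V] [DecidableEq V]
    (Ps : Finset (Finset V)) : ℤ :=
  (∑ A ∈ Ps, (G.cut A : ℤ)) - 10 * Ps.card + 16

/-- Weight `w_G(𝒫)` of a vertex partition `𝒫`. -/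
def pweight (G : Multigraph V) [Fintype V] [DecidableEq V]
    (P : Finpartition (univ : Finset V)) : ℤ :=
  G.partsWeight P.parts

/-- Weight `w_{G[A]}(Q)` of a partition `Q` of `A` in the induced subgraph `G[A]`. -/
def inducedWeight (G : Multigraph V) [DecidableEq V] (A : Finset V)
    (Q : Finpartition A) : ℤ :=
  (∑ B ∈ Q.parts, ((∑ u ∈ B, ∑ v ∈ A \ B, G.mult u v : ℕ) : ℤ))
    - 10 * Q.parts.card + 16

/-- Isomorphism of multigraphs. -/
def Iso (G : Multigraph V) (H : Multigraph W) : Prop :=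
  ∃ e : V ≃ W, ∀ u v, H.mult (e u) (e v) = G.mult u v

/-- Contraction `G/𝒫`: identify each part to a single vertex and delete loops. -/
def contract (G : Multigraph V) [Fintype V] [DecidableEq V]
    (P : Finpartition (univ : Finset V)) : Multigraph {A // A ∈ P.parts} where
  mult A B := if A = B then 0 else ∑ u ∈ A.1, ∑ v ∈ B.1, G.mult u v
  symm := by
    intro A B
    by_cases h : A = B
    · simp [h]
    · rw [if_neg h, if_neg (Ne.symm h), Finset.sum_comm]
      exact Finset.sum_congr rfl fun b _ => Finset.sum_congr rfl fun a _ => G.symm a b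
  loopless := by intro A; simp

/-- Adding one new edge between distinct existing vertices. -/
def addEdge (G : Multigraph V) [DecidableEq V] (x y : V) (hxy : x ≠ y) : Multigraph V where
  mult u v := G.mult u v + (if (u = x ∧ v = y) ∨ (u = y ∧ v = x) then 1 else 0)
  symm := by
    intro u v
    rw [G.symm u v]
    by_cases h1 : (u = x ∧ v = y) ∨ (u = y ∧ v = x)
    · rw [if_pos h1, if_pos (by tauto)]
    · rw [if_neg h1, if_neg (by tauto)]
  loopless := by
    intro v
    have h : ¬((v = x ∧ v = y) ∨ (v = y ∧ v = x)) := by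
      rintro (⟨rfl, rfl⟩ | ⟨rfl, rfl⟩) <;> exact hxy rfl
    simp [h, G.loopless]

/-- `aK₂`: two vertices joined by `a` parallel edges. -/
def kTwo (a : ℕ) : Multigraph (Fin 2) where
  mult u v := if u = v then 0 else a
  symm := by
    intro u v
    by_cases h : u = v
    · subst h; rfl
    · rw [if_neg h, if_neg (Ne.symm h)]
  loopless := by intro v; simp

def triMult (a b c : ℕ) : ℕ → ℕ → ℕ
  | 0, 1 => a | 1, 0 => a
  | 0, 2 => b | 2, 0 => b
  | 1, 2 => c | 2, 1 => c
  | _, _ => 0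

/-- `T_{a,b,c}`: three vertices, the three pairs joined by `a`, `b`, `c` parallel edges. -/
def triangle (a b c : ℕ) : Multigraph (Fin 3) where
  mult u v := triMult a b c u.val v.val
  symm := by intro u v; fin_cases u <;> fin_cases v <;> rfl
  loopless := by intro v; fin_cases v <;> rfl

def w1Mult : ℕ → ℕ → ℕ
  | 0, 1 => 1 | 1, 0 => 1 | 0, 2 => 1 | 2, 0 => 1 | 1, 2 => 1 | 2, 1 => 1
  | 0, 3 => 3 | 3, 0 => 3 | 1, 3 => 3 | 3, 1 => 3 | 2, 3 => 3 | 3, 2 => 3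
  | _, _ => 0

/-- The 4-vertex, 12-edge planar multigraph `W₁`: a triangle of single edges whose
three vertices are each joined to a central vertex by triple edges. -/
def W1 : Multigraph (Fin 4) where
  mult u v := w1Mult u.val v.val
  symm := by decide
  loopless := by decide

def w2Mult : ℕ → ℕ → ℕ
  | 0, 1 => 3 | 1, 0 => 3
  | 0, 2 => 2 | 2, 0 => 2 | 0, 3 => 2 | 3, 0 => 2
  | 1, 2 => 2 | 2, 1 => 2 | 1, 3 => 2 | 3, 1 => 2
  | 2, 3 => 1 | 3, 2 => 1
  | _, _ => 0

/-- The 4-vertex, 12-edge planar multigraph `W₂`. -/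
def W2 : Multigraph (Fin 4) where
  mult u v := w2Mult u.val v.val
  symm := by decide
  loopless := by decide

def q4Mult (a1 a2 a3 a4 : ℕ) : ℕ → ℕ → ℕ
  | 0, 1 => a1 | 1, 0 => a1
  | 1, 2 => a2 | 2, 1 => a2
  | 2, 3 => a3 | 3, 2 => a3
  | 3, 0 => a4 | 0, 3 => a4
  | _, _ => 0

/-- `Q_{a₁,a₂,a₃,a₄}`: the 4-cycle with edge multiplicities `a₁,…,a₄`. -/
def Q4 (a1 a2 a3 a4 : ℕ) : Multigraph (Fin 4) where
  mult u v := q4Mult a1 a2 a3 a4 u.val v.val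
  symm := by intro u v; fin_cases u <;> fin_cases v <;> rfl
  loopless := by intro v; fin_cases v <;> rfl

/-- Membership (up to isomorphism) in `𝒩₅ = {2K₂, 3K₂, T₁,₃,₃, T₂,₂,₃, W₁, W₂}`. -/
def InN5 (G : Multigraph V) : Prop :=
  G.Iso (kTwo 2) ∨ G.Iso (kTwo 3) ∨ G.Iso (triangle 1 3 3) ∨
    G.Iso (triangle 2 2 3) ∨ G.Iso W1 ∨ G.Iso W2

/-- `𝒮₅`-contractibility: `G` is connected, `w(G) ≥ 0` (every partition with at least
two parts has nonnegative weight), and no contraction of `G` lies in `𝒩₅`. -/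
def S5Contractible (G : Multigraph V) [Fintype V] [DecidableEq V] : Prop :=
  G.Connected ∧
    (∀ P : Finpartition (univ : Finset V), 2 ≤ P.parts.card → 0 ≤ G.pweight P) ∧
    (∀ P : Finpartition (univ : Finset V), ¬ InN5 (G.contract P))

/-- Strong `ℤ_ℓ`-connectivity: every zero-sum boundary `β` admits a `β`-orientation.
An orientation is encoded as `o : V → V → ℕ` where `o u v` is the number of the
`G.mult u v` parallel edges between `u` and `v` that are oriented from `u` to `v`. -/
def StronglyZConnected (G : Multigraph V) [Fintype V] (l : ℕ) : Prop :=
  ∀ β : V → ZMod l, ∑ v, β v = 0 →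
    ∃ o : V → V → ℕ, (∀ u v, o u v + o v u = G.mult u v) ∧
      ∀ v, (∑ u, (o v u : ZMod l)) - (∑ u, (o u v : ZMod l)) = β v

end Multigraph

open Multigraph

/-! Adding an edge can only raise connectivity and partition weights, so only the condition on
contractions needs an argument. If the ends of the new edge lie in one part of `𝒫`, then
`G'/𝒫 = G/𝒫`. Otherwise `G'/𝒫` is `G/𝒫` plus one edge: if that is `3K₂`, then `G/𝒫 ≅ 2K₂`;
any other member of `𝒩₅` has weight `0` under its partition into singletons, and then
`w_G(𝒫) = −2 < 0`, because `w_G(𝒫)` is the weight of `G/𝒫` under its partition into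
singletons. -/

namespace Multigraph

variable {V W : Type*}

@[ext]
lemma ext {G H : Multigraph V} (h : ∀ u v, G.mult u v = H.mult u v) : G = H := by
  cases G; cases H; congr; funext u v; exact h u v

section Monotone

variable {G H : Multigraph V} (hGH : ∀ u v, G.mult u v ≤ H.mult u v)
include hGH

lemma toSimpleGraph_mono : G.toSimpleGraph ≤ H.toSimpleGraph :=
  fun u v huv => lt_of_lt_of_le huv (hGH u v)

lemma Connected.mono (hG : G.Connected) : H.Connected :=
  SimpleGraph.Connected.mono (toSimpleGraph_mono hGH) hG

lemma cut_mono [Fintype V] [DecidableEq V] (X : Finset V) : G.cut X ≤ H.cut X :=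
  sum_le_sum fun u _ => sum_le_sum fun v _ => hGH u v

lemma pweight_mono [Fintype V] [DecidableEq V] (P : Finpartition (univ : Finset V)) :
    G.pweight P ≤ H.pweight P := by
  have hcut := sum_le_sum fun A (_ : A ∈ P.parts) =>
    (Nat.cast_le (α := ℤ)).2 (cut_mono hGH A)
  simp only [pweight, partsWeight]
  linarith

end Monotone

section AddEdge

variable [DecidableEq V]

lemma mult_le_mult_addEdge (G : Multigraph V) {x y : V} (hxy : x ≠ y) (u v : V) :
    G.mult u v ≤ (G.addEdge x y hxy).mult u v :=
  Nat.le_add_right _ _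

lemma sum_sum_mult_addEdge (G : Multigraph V) {x y : V} (hxy : x ≠ y) (s t : Finset V) :
    ∑ u ∈ s, ∑ v ∈ t, (G.addEdge x y hxy).mult u v =
      ∑ u ∈ s, ∑ v ∈ t, G.mult u v + (if x ∈ s ∧ y ∈ t then 1 else 0) +
        (if y ∈ s ∧ x ∈ t then 1 else 0) := by
  have hsplit : ∀ u v : V, (if (u = x ∧ v = y) ∨ (u = y ∧ v = x) then 1 else 0) =
      (if u = x ∧ v = y then 1 else 0) + (if u = y ∧ v = x then 1 else 0) := by
    intro u v
    by_cases hx : u = x <;> by_cases hy : u = y <;> simp_all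
  simp [addEdge, hsplit, sum_add_distrib, ite_and, add_assoc]

end AddEdge

/-- The weight `2e(G) − 10|V| + 16` of the partition of `G` into singletons. -/
def trivialWeight [Fintype V] (G : Multigraph V) : ℤ :=
  ∑ v, (G.degree v : ℤ) - 10 * Fintype.card V + 16

lemma trivialWeight_addEdge [Fintype V] [DecidableEq V] (G : Multigraph V) {x y : V}
    (hxy : x ≠ y) : (G.addEdge x y hxy).trivialWeight = G.trivialWeight + 2 := by
  have h := G.sum_sum_mult_addEdge hxy univ univ
  simp only [mem_univ, and_self, if_true] at h
  simp only [trivialWeight, degree, ← Nat.cast_sum, h]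
  push_cast
  ring

lemma Iso.trivialWeight_eq [Fintype V] [Fintype W] {G : Multigraph V} {H : Multigraph W}
    (h : G.Iso H) : G.trivialWeight = H.trivialWeight := by
  obtain ⟨e, he⟩ := h
  have hdeg : ∀ v, G.degree v = H.degree (e v) := fun v =>
    Fintype.sum_equiv e _ _ fun u => (he v u).symm
  simp only [trivialWeight, hdeg, Fintype.card_congr e]
  rw [Fintype.sum_equiv e (fun v => (H.degree (e v) : ℤ)) (fun w => (H.degree w : ℤ))
    fun _ => rfl]

lemma Iso.kTwo_of_addEdge [DecidableEq W] {K : Multigraph W} {a b : W} (hab : a ≠ b)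
    {m : ℕ} (h : (K.addEdge a b hab).Iso (kTwo (m + 1))) : K.Iso (kTwo m) := by
  obtain ⟨e, he⟩ := h
  have hcover : ∀ w, w = a ∨ w = b := fun w => by
    have hfin : ∀ p q r : Fin 2, p ≠ q → r = p ∨ r = q := by decide
    simpa only [e.injective.eq_iff] using hfin (e a) (e b) (e w) (e.injective.ne hab)
  refine ⟨e, fun u v => ?_⟩
  by_cases huv : u = v
  · subst huv
    simp [kTwo, K.loopless]
  · have hpair : (u = a ∧ v = b) ∨ (u = b ∧ v = a) := by
      rcases hcover u with rfl | rfl <;> rcases hcover v with rfl | rfl <;> simp_all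
    have h1 := he u v
    simp only [kTwo, addEdge, e.injective.ne huv, if_false, if_pos hpair] at h1 ⊢
    omega

lemma InN5.iso_kTwo_three_or_trivialWeight_eq_zero [Fintype W] {H : Multigraph W}
    (h : InN5 H) : H.Iso (kTwo 3) ∨ H.trivialWeight = 0 := by
  rcases h with h | h | h | h | h | h
  · exact .inr (h.trivialWeight_eq.trans (by decide))
  · exact .inl h
  · exact .inr (h.trivialWeight_eq.trans (by decide))
  · exact .inr (h.trivialWeight_eq.trans (by decide))
  · exact .inr (h.trivialWeight_eq.trans (by decide))
  · exact .inr (h.trivialWeight_eq.trans (by decide))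

section Contract

variable [Fintype V] [DecidableEq V] (G : Multigraph V) (P : Finpartition (univ : Finset V))

lemma sum_parts_sum {M : Type*} [AddCommMonoid M] (f : V → M) :
    ∑ B ∈ P.parts, ∑ v ∈ B, f v = ∑ v, f v := by
  calc ∑ B ∈ P.parts, ∑ v ∈ B, f v = ∑ v ∈ P.parts.biUnion id, f v :=
        (sum_biUnion P.supIndep.pairwiseDisjoint).symm
    _ = ∑ v, f v := by rw [P.biUnion_parts]

lemma degree_contract (A : {A // A ∈ P.parts}) : (G.contract P).degree A = G.cut A := by
  set S : Finset V → Finset V → ℕ := fun X Y => ∑ u ∈ X, ∑ v ∈ Y, G.mult u v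
  have hdeg : (G.contract P).degree A = ∑ B ∈ univ.erase A, S A B := by
    rw [degree, ← add_sum_erase _ _ (mem_univ A)]
    simp only [contract, if_true, zero_add]
    exact sum_congr rfl fun B hB => if_neg (ne_of_mem_erase hB).symm
  have hall : ∑ B : {A // A ∈ P.parts}, S A B = S A A + G.cut A := by
    calc ∑ B : {A // A ∈ P.parts}, S A B
        = ∑ u ∈ (A : Finset V), ∑ v, G.mult u v := by
          rw [sum_coe_sort P.parts (S A), sum_comm]
          exact sum_congr rfl fun u _ => sum_parts_sum P _
      _ = S A A + G.cut A := by
          simp only [S, cut, ← sum_add_distrib, sum_add_sum_compl]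
  rw [← add_sum_erase _ _ (mem_univ A), ← hdeg] at hall
  omega

lemma pweight_eq_trivialWeight_contract : G.pweight P = (G.contract P).trivialWeight := by
  simp only [pweight, partsWeight, trivialWeight, degree_contract, Fintype.card_coe]
  rw [sum_coe_sort P.parts fun A => (G.cut A : ℤ)]

lemma two_le_card_parts_of_pweight_neg (h : G.pweight P < 0) : 2 ≤ P.parts.card := by
  have hcut : 0 ≤ ∑ A ∈ P.parts, (G.cut A : ℤ) := sum_nonneg fun _ _ => Nat.cast_nonneg _
  simp only [pweight, partsWeight] at h
  omega

def partOf (x : V) : {A // A ∈ P.parts} := ⟨P.part x, P.part_mem.2 (mem_univ x)⟩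

variable {P}

lemma mem_iff_eq_partOf {x : V} {A : {A // A ∈ P.parts}} :
    x ∈ (A : Finset V) ↔ A = partOf P x := by
  rw [Subtype.ext_iff, eq_comm, partOf, P.part_eq_iff_mem A.2]

variable {x y : V} (hxy : x ≠ y)

lemma contract_addEdge_mult_of_ne {A B : {A // A ∈ P.parts}} (hAB : A ≠ B) :
    ((G.addEdge x y hxy).contract P).mult A B = (G.contract P).mult A B +
      (if A = partOf P x ∧ B = partOf P y then 1 else 0) +
        (if A = partOf P y ∧ B = partOf P x then 1 else 0) := by
  simp only [contract, if_neg hAB, sum_sum_mult_addEdge G hxy, mem_iff_eq_partOf]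

lemma contract_addEdge_of_partOf_eq (h : partOf P x = partOf P y) :
    (G.addEdge x y hxy).contract P = G.contract P := by
  ext A B
  by_cases hAB : A = B
  · simp only [hAB, Multigraph.loopless]
  · rw [contract_addEdge_mult_of_ne G hxy hAB, h]
    have hA : ¬(A = partOf P y ∧ B = partOf P y) := fun h' => hAB (h'.1.trans h'.2.symm)
    simp only [hA, if_false, add_zero]

lemma contract_addEdge_of_partOf_ne (h : partOf P x ≠ partOf P y) :
    (G.addEdge x y hxy).contract P = (G.contract P).addEdge _ _ h := by
  ext A B
  by_cases hAB : A = B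
  · simp only [hAB, Multigraph.loopless]
  · rw [contract_addEdge_mult_of_ne G hxy hAB]
    simp only [addEdge, add_assoc]
    congr 1
    by_cases h1 : A = partOf P x ∧ B = partOf P y
    · have h2 : ¬(A = partOf P y ∧ B = partOf P x) := fun h2 => h (h1.1.symm.trans h2.1)
      rw [if_pos h1, if_neg h2, if_pos (Or.inl h1)]
    · rw [if_neg h1, zero_add]
      exact if_congr (or_iff_right h1).symm rfl rfl

end Contract

end Multigraph

open Multigraph

/-- adding one new edge (between distinct existing vertices) to an
`𝒮₅`-contractible multigraph yields an `𝒮₅`-contractible multigraph `G'` with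
`w(G') ≥ w(G)`. -/
theorem s5_add_edge {V : Type*} [Fintype V] [DecidableEq V] (G : Multigraph V)
    (h : S5Contractible G) (x y : V) (hxy : x ≠ y) :
    S5Contractible (G.addEdge x y hxy) ∧
      ∀ P : Finpartition (univ : Finset V), 2 ≤ P.parts.card →
        ∃ P₀ : Finpartition (univ : Finset V), 2 ≤ P₀.parts.card ∧
          G.pweight P₀ ≤ (G.addEdge x y hxy).pweight P := by
  obtain ⟨hconn, hw, hN⟩ := h
  have hle := G.mult_le_mult_addEdge hxy
  refine ⟨⟨hconn.mono hle, fun P hP => (hw P hP).trans (pweight_mono hle P), fun P hP => ?_⟩,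
    fun P hP => ⟨P, hP, pweight_mono hle P⟩⟩
  by_cases hpart : partOf P x = partOf P y
  · exact hN P (by rwa [contract_addEdge_of_partOf_eq G hxy hpart] at hP)
  rw [contract_addEdge_of_partOf_ne G hxy hpart] at hP
  rcases hP.iso_kTwo_three_or_trivialWeight_eq_zero with h3 | h0
  · exact hN P (Or.inl (Iso.kTwo_of_addEdge hpart h3))
  · have hneg : G.pweight P < 0 := by
      have h2 := trivialWeight_addEdge (G.contract P) hpart
      rw [pweight_eq_trivialWeight_contract]
      linarith
    exact (hw P (G.two_le_card_parts_of_pweight_neg P hneg)).not_gt hneg
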